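/- arXiv:0811.3792 — 4 statements merged into one kernel-verified Lean document; each statement's English description precedes it below -/
import Mathlib

section
/- Let K be a nonarchimedean field of characteristic zero with |p| = 1/p, and let b, T ∈ K. For r ∈ (0,1), if |b - T| < r·|b|, then |b^p - T^p| ≤ max{r^p·|b|^p, p^{-1}·r·|b|^p}. -/
/-!
With `ε = T - b`, split `b ^ p - T ^ p = -(((b + ε) ^ p - b ^ p - ε ^ p) + ε ^ p)`. The term `ε ^ p`
is at most `r ^ p * |b| ^ p`. The mixed binomial terms all carry a factor `p` (since `p` divides
`p.choose k` for `0 < k < p`) and at least one factor `ε`, so their sum is at most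
`|p| * r * |b| ^ p`.
-/

open Finset

theorem IsNonarchimedean.apply_add_pow_prime_sub_le {R : Type*} [CommRing R] [IsDomain R]
    {v : AbsoluteValue R ℝ} (hv : IsNonarchimedean v) {p : ℕ} (hp : p.Prime) {x y : R}
    (hyx : v y ≤ v x) :
    v ((x + y) ^ p - x ^ p - y ^ p) ≤ v p * v y * v x ^ (p - 1) := by
  set c : ℕ → R := fun k ↦ x ^ (k - 1) * y ^ (p - k - 1) * ((p.choose k / p : ℕ) : R)
  have hexpand : (x + y) ^ p - x ^ p - y ^ p = p * x * y * ∑ k ∈ Ioo 0 p, c k := by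
    rw [add_pow_prime_eq hp]; ring
  obtain ⟨k, hk, hsum⟩ := hv.finset_image_add_of_nonempty c (t := Ioo 0 p) ⟨1, by simp [hp.one_lt]⟩
  obtain ⟨hk0, hkp⟩ := mem_Ioo.mp hk
  have hterm : v (c k) ≤ v x ^ (p - 2) :=
    calc v (c k) ≤ v x ^ (k - 1) * v x ^ (p - k - 1) * 1 := by
          simp only [c, map_mul, map_pow]
          gcongr
          exact hv.apply_natCast_le_one
      _ = v x ^ (p - 2) := by rw [mul_one, ← pow_add]; congr 1; omega
  have hp2 : p - 1 = 1 + (p - 2) := by have := hp.two_le; omega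
  calc v ((x + y) ^ p - x ^ p - y ^ p) = v p * v x * v y * v (∑ k ∈ Ioo 0 p, c k) := by
        simp only [hexpand, map_mul]
    _ ≤ v p * v x * v y * v x ^ (p - 2) := by gcongr; exact hsum.trans hterm
    _ = v p * v y * v x ^ (p - 1) := by rw [hp2, pow_add]; ring

theorem stmt0_general {K : Type*} [Field K] (p : ℕ) (hp : p.Prime)
    (v : AbsoluteValue K ℝ)
    (hna : ∀ x y : K, v (x + y) ≤ max (v x) (v y))
    (hvp : v (p : K) = 1 / p)
    (b T : K) (r : ℝ) (hr1 : r < 1)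
    (h : v (b - T) < r * v b) :
    v (b ^ p - T ^ p) ≤ max (r ^ p * (v b) ^ p) ((p : ℝ)⁻¹ * r * (v b) ^ p) := by
  have hε : v (T - b) ≤ r * v b := by rw [v.map_sub]; exact h.le
  have hεb : v (T - b) ≤ v b := hε.trans (mul_le_of_le_one_left (v.nonneg b) hr1.le)
  have hsplit : b ^ p - T ^ p = -(((b + (T - b)) ^ p - b ^ p - (T - b) ^ p) + (T - b) ^ p) := by
    ring
  rw [hsplit, v.map_neg, max_comm]
  refine (hna _ _).trans (max_le_max ?_ ?_)
  · calc _ ≤ v p * v (T - b) * v b ^ (p - 1) :=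
          IsNonarchimedean.apply_add_pow_prime_sub_le hna hp hεb
      _ ≤ (p : ℝ)⁻¹ * (r * v b) * v b ^ (p - 1) := by rw [hvp, one_div]; gcongr
      _ = (p : ℝ)⁻¹ * r * v b ^ p := by
          rw [← mul_pow_sub_one hp.ne_zero (v b)]; ring
  · calc v ((T - b) ^ p) ≤ (r * v b) ^ p := by rw [map_pow]; gcongr
      _ = r ^ p * v b ^ p := mul_pow _ _ _

/-- Let `K` be a nonarchimedean field of characteristic zero with `|p| = 1/p`,
and let `b, T ∈ K`. For `r ∈ (0,1)`, if `|b - T| < r·|b|`, then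
`|b^p - T^p| ≤ max (r^p·|b|^p) (p⁻¹·r·|b|^p)`. -/
theorem stmt0 {K : Type*} [Field K] [CharZero K] (p : ℕ) (hp : p.Prime)
    (v : AbsoluteValue K ℝ)
    (hna : ∀ x y : K, v (x + y) ≤ max (v x) (v y))
    (hvp : v (p : K) = 1 / p)
    (b T : K) (r : ℝ) (hr0 : 0 < r) (hr1 : r < 1)
    (h : v (b - T) < r * v b) :
    v (b ^ p - T ^ p) ≤ max (r ^ p * (v b) ^ p) ((p : ℝ)⁻¹ * r * (v b) ^ p) :=
  stmt0_general p hp v hna hvp b T r hr1 h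
end

section
/- Let K be a complete nonarchimedean field of characteristic zero with |p|=1/p, and let β ∈ K with |β| = 1. Suppose b > 0 and 0 < a < min{−log_θ p + b, pb} where θ ∈ (0,1). If |η₀| ≤ θ^b, |T′₀| < r·θ^b for r ∈ [0,1], then |(β+η₀+T′₀)^p − (β+η₀)^p| ≤ max{r^p·θ^{pb}, p^{−1}·r·θ^b} < r·θ^a. -/
/-!
Expand `(x + t)^p - x^p` binomially: the top term `t^p` has norm `|t|^p`, and every other
coefficient `C(p, k)` with `0 < k < p` is divisible by `p`, so those terms have norm at most
`|p| · |t| = p⁻¹ |t|`. The comparison with `r θ^a` is then a matter of exponents, using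
`θ^(-log_θ p) = p⁻¹`.
-/

theorem AbsoluteValue.add_pow_sub_pow_le_of_prime {R : Type*} [CommRing R] [Nontrivial R]
    (v : AbsoluteValue R ℝ) (hna : IsNonarchimedean v) {p : ℕ} (hp : p.Prime) {x t : R}
    (hx : v x ≤ 1) (ht : v t ≤ 1) :
    v ((x + t) ^ p - x ^ p) ≤ max (v t ^ p) (v (p : R) * v t) := by
  have hexp : (x + t) ^ p - x ^ p =
      ∑ k ∈ Finset.range p, x ^ k * t ^ (p - k) * (p.choose k : R) := by
    rw [add_pow, Finset.sum_range_succ]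
    simp
  rw [hexp]
  refine (hna.apply_sum_le_sup (Finset.nonempty_range_iff.mpr hp.ne_zero)).trans
    (Finset.sup'_le _ _ fun k hk => ?_)
  rw [Finset.mem_range] at hk
  rcases eq_or_ne k 0 with rfl | hk0
  · simp
  obtain ⟨m, hm⟩ := hp.dvd_choose_self hk0 hk
  calc v (x ^ k * t ^ (p - k) * (p.choose k : R))
      = v x ^ k * v t ^ (p - k) * (v (p : R) * v (m : R)) := by
        rw [hm]
        push_cast
        simp only [map_mul, map_pow]
    _ ≤ 1 * v t * (v (p : R) * 1) := by
        gcongr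
        · exact pow_le_one₀ (v.nonneg _) hx
        · exact pow_le_of_le_one (v.nonneg _) ht (Nat.sub_ne_zero_of_lt hk)
        · exact hna.apply_natCast_le_one
    _ ≤ max (v t ^ p) (v (p : R) * v t) := by
        rw [one_mul, mul_one, mul_comm]
        exact le_max_right _ _

theorem Real.inv_mul_rpow_lt_rpow_of_lt_neg_logb_add {θ a b p : ℝ} (hθ0 : 0 < θ) (hθ1 : θ < 1)
    (hp : 0 < p) (ha : a < -Real.logb θ p + b) : p⁻¹ * θ ^ b < θ ^ a :=
  calc p⁻¹ * θ ^ b = θ ^ (-Real.logb θ p + b) := by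
        rw [Real.rpow_add hθ0, Real.rpow_neg hθ0.le, Real.rpow_logb hθ0 hθ1.ne hp]
    _ < θ ^ a := Real.rpow_lt_rpow_of_exponent_gt hθ0 hθ1 ha

theorem stmt3_general {K : Type*} [Field K] (p : ℕ) (hp : p.Prime)
    (v : AbsoluteValue K ℝ) (hna : ∀ x y : K, v (x + y) ≤ max (v x) (v y))
    (hvp : v (p : K) = 1 / p)
    (θ a b r : ℝ) (hθ0 : 0 < θ) (hθ1 : θ < 1) (hb : 0 < b)
    (ha : a < min (-(Real.log p / Real.log θ) + b) (p * b))
    (hr : r ∈ Set.Icc (0 : ℝ) 1)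
    (β η₀ T'₀ : K) (hβ : v β = 1) (hη : v η₀ ≤ θ ^ b) (hT : v T'₀ < r * θ ^ b) :
    v ((β + η₀ + T'₀) ^ p - (β + η₀) ^ p) ≤
        max (r ^ p * θ ^ ((p : ℝ) * b)) ((p : ℝ)⁻¹ * r * θ ^ b) ∧
      max (r ^ p * θ ^ ((p : ℝ) * b)) ((p : ℝ)⁻¹ * r * θ ^ b) < r * θ ^ a := by
  obtain ⟨-, hr1⟩ := hr
  rw [lt_min_iff, Real.log_div_log] at ha
  have hθb : θ ^ b < 1 := Real.rpow_lt_one hθ0.le hθ1 hb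
  have hr : 0 < r := pos_of_mul_pos_left ((v.nonneg _).trans_lt hT) (by positivity)
  have hx : v (β + η₀) ≤ 1 := (hna _ _).trans (max_le hβ.le (hη.trans hθb.le))
  have ht : v T'₀ ≤ 1 := hT.le.trans (mul_le_one₀ hr1 (by positivity) hθb.le)
  have hpb : θ ^ ((p : ℝ) * b) = (θ ^ b) ^ p := by rw [mul_comm, Real.rpow_mul_natCast hθ0.le]
  refine ⟨(v.add_pow_sub_pow_le_of_prime hna hp hx ht).trans (max_le_max ?_ ?_), max_lt ?_ ?_⟩
  · rw [hpb, ← mul_pow]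
    exact pow_le_pow_left₀ (v.nonneg _) hT.le p
  · rw [hvp, one_div, mul_assoc]
    exact mul_le_mul_of_nonneg_left hT.le (by positivity)
  · calc r ^ p * θ ^ ((p : ℝ) * b) ≤ r * θ ^ ((p : ℝ) * b) := by
          gcongr
          exact pow_le_of_le_one hr.le hr1 hp.ne_zero
      _ < r * θ ^ a := by
          gcongr
          exact Real.rpow_lt_rpow_of_exponent_gt hθ0 hθ1 ha.2
  · rw [mul_assoc, mul_left_comm]
    exact mul_lt_mul_of_pos_left
      (Real.inv_mul_rpow_lt_rpow_of_lt_neg_logb_add hθ0 hθ1 (by exact_mod_cast hp.pos) ha.1) hr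

/-- Let `K` be a complete nonarchimedean field of characteristic zero with
`|p| = 1/p`, and `β ∈ K` with `|β| = 1`.  Suppose `b > 0` and
`0 < a < min {−log_θ p + b, pb}` where `θ ∈ (0,1)`.  If `|η₀| ≤ θ^b` and `|T′₀| < r·θ^b` for
`r ∈ [0,1]`, then `|(β+η₀+T′₀)^p − (β+η₀)^p| ≤ max {r^p·θ^{pb}, p⁻¹·r·θ^b} < r·θ^a`. -/
theorem stmt3 {K : Type*} [Field K] [CharZero K] (p : ℕ) (hp : p.Prime)
    (v : AbsoluteValue K ℝ) (hna : ∀ x y : K, v (x + y) ≤ max (v x) (v y))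
    (hvp : v (p : K) = 1 / p)
    (θ a b r : ℝ) (hθ0 : 0 < θ) (hθ1 : θ < 1) (hb : 0 < b)
    (ha0 : 0 < a) (ha : a < min (-(Real.log p / Real.log θ) + b) (p * b))
    (hr : r ∈ Set.Icc (0 : ℝ) 1)
    (β η₀ T'₀ : K) (hβ : v β = 1) (hη : v η₀ ≤ θ ^ b) (hT : v T'₀ < r * θ ^ b) :
    v ((β + η₀ + T'₀) ^ p - (β + η₀) ^ p) ≤
        max (r ^ p * θ ^ ((p : ℝ) * b)) ((p : ℝ)⁻¹ * r * θ ^ b) ∧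
      max (r ^ p * θ ^ ((p : ℝ) * b)) ((p : ℝ)⁻¹ * r * θ ^ b) < r * θ ^ a :=
  stmt3_general p hp v hna hvp θ a b r hθ0 hθ1 hb ha hr β η₀ T'₀ hβ hη hT
end

section
/- Let K be a complete discretely valued field of mixed characteristic (0,p) with uniformizer π_K, and let ϖ₁,…,ϖ_p be the roots of T^p + π_K T^{p−1} − π_K in a splitting field K_*. Then for any i ≠ j, the valuation v_{K_*}(ϖ_i − ϖ_j) = 2, where v_{K_*} is normalized so that v_{K_*}(ϖ_i) = 1. -/
/-!
Normalize the valuation by `v π = p`. Every root of `f = X ^ p + π X ^ (p - 1) - π` has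
valuation `1`. Writing `ϖ₁ = ϖ₂ + δ`, the quotient `(f (ϖ₂ + δ) - f ϖ₂) / δ` is a monic polynomial
of degree `p - 1` in `δ`. Its constant term `f' ϖ₂` has valuation `2 (p - 1)`, because `v p ≥ v π`
makes `π (p - 1) ϖ₂ ^ (p - 2)` dominate `p ϖ₂ ^ (p - 1)`; as `p` divides the binomial coefficients,
its `k`-th coefficient has valuation at least `2 (p - 1 - k)`. So its Newton polygon is a single
segment of slope `-2`, and `v δ = 2`.
-/

open Finset

section
variable {R : Type*} [CommRing R]

theorem add_pow_sub_pow_eq_mul_sum (y d : R) {m n : ℕ} (hmn : m ≤ n) :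
    (y + d) ^ m - y ^ m =
      d * ∑ k ∈ range n, (m.choose (k + 1) : R) * y ^ (m - (k + 1)) * d ^ k := by
  have hext : ∑ k ∈ range m, (m.choose (k + 1) : R) * y ^ (m - (k + 1)) * d ^ k =
      ∑ k ∈ range n, (m.choose (k + 1) : R) * y ^ (m - (k + 1)) * d ^ k := by
    refine sum_subset (range_subset_range.2 hmn) fun k _ hk => ?_
    rw [Nat.choose_eq_zero_of_lt (by simp at hk; omega), Nat.cast_zero, zero_mul, zero_mul]
  rw [← hext, mul_sum, add_comm y, add_pow, sum_range_succ']
  simp only [pow_zero, one_mul, Nat.sub_zero, Nat.choose_zero_right, Nat.cast_one, mul_one,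
    add_sub_cancel_right]
  exact sum_congr rfl fun k _ => by ring

/-- The coefficients of `(f (y + X) - f y) / X` for `f = X ^ (n + 1) + c * X ^ n`. -/
def divDiffCoeff (c y : R) (n k : ℕ) : R :=
  (n + 1).choose (k + 1) * y ^ (n - k) + c * n.choose (k + 1) * y ^ (n - (k + 1))

theorem add_pow_succ_add_mul_pow_sub (c y d : R) (n : ℕ) :
    (y + d) ^ (n + 1) + c * (y + d) ^ n - (y ^ (n + 1) + c * y ^ n) =
      d * ∑ k ∈ range (n + 1), divDiffCoeff c y n k * d ^ k := by
  have h₁ := add_pow_sub_pow_eq_mul_sum y d (le_refl (n + 1))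
  have h₂ := add_pow_sub_pow_eq_mul_sum y d (Nat.le_add_right n 1)
  simp only [Nat.add_sub_add_right] at h₁
  simp only [divDiffCoeff, add_mul, sum_add_distrib, mul_add, mul_assoc c, ← mul_sum]
  linear_combination h₁ + c * h₂

theorem divDiffCoeff_self (c y : R) (n : ℕ) : divDiffCoeff c y n n = 1 := by
  simp [divDiffCoeff]

end

namespace IsNonarchimedean
variable {L : Type*} [Field L] {w : AbsoluteValue L ℝ}

theorem apply_lt_one_of_root (hw : IsNonarchimedean w) {n : ℕ} {c z : L} (hc : w c < 1)
    (hz : z ^ (n + 1) + c * z ^ n - c = 0) : w z < 1 := by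
  by_contra! hz1
  have hzn : 1 ≤ w z ^ n := one_le_pow₀ hz1
  have hrest : w (1 + -z ^ n) ≤ w z ^ n :=
    (hw _ _).trans (max_le (by rwa [map_one]) (by rw [map_neg_eq_map, map_pow]))
  have : w z ^ (n + 1) < w z ^ (n + 1) :=
    calc w z ^ (n + 1) = w c * w (1 + -z ^ n) := by
          rw [← map_pow, ← map_mul]; congr 1; linear_combination hz
      _ ≤ w c * w z ^ n := mul_le_mul_of_nonneg_left hrest (w.nonneg c)
      _ < w z ^ n := mul_lt_of_lt_one_left (zero_lt_one.trans_le hzn) hc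
      _ ≤ w z ^ (n + 1) := by rw [pow_succ]; exact le_mul_of_one_le_right (by positivity) hz1
  exact lt_irrefl _ this

theorem pow_apply_eq_of_root (hw : IsNonarchimedean w) {n : ℕ} (hn : 0 < n) {c z : L}
    (hc : w c < 1) (hz : z ^ (n + 1) + c * z ^ n - c = 0) : w z ^ (n + 1) = w c := by
  have hzn : w (-z ^ n) < w 1 := by
    rw [map_neg_eq_map, map_pow, map_one]
    exact pow_lt_one₀ (w.nonneg z) (hw.apply_lt_one_of_root hc hz) hn.ne'
  calc w z ^ (n + 1) = w c * w (1 + -z ^ n) := by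
        rw [← map_pow, ← map_mul]; congr 1; linear_combination hz
    _ = w c := by rw [hw.add_eq_left_of_lt hzn, map_one, mul_one]

theorem apply_eq_of_sum_mul_pow_eq_zero (hw : IsNonarchimedean w) {n : ℕ} (hn : 0 < n)
    {b : ℕ → L} {x : L} {s : ℝ} (hroot : ∑ k ∈ range (n + 1), b k * x ^ k = 0)
    (hmonic : b n = 1) (h0 : w (b 0) = s ^ n) (hb : ∀ k < n, w (b k) ≤ s ^ (n - k)) :
    w x = s := by
  have hs : 0 ≤ s := by
    simpa [Nat.sub_sub_self hn] using (w.nonneg _).trans (hb (n - 1) (by omega))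
  have hb' : ∀ k ≤ n, w (b k) ≤ s ^ (n - k) := fun k hk => by
    rcases hk.lt_or_eq with hk | rfl
    · exact hb k hk
    · simp [hmonic]
  have hterm : ∀ k, w (b k * x ^ k) = w (b k) * w x ^ k := fun k => by rw [map_mul, map_pow]
  have hneg : ∀ a : L, w a = w (-a) := fun a => (w.map_neg a).symm
  rcases lt_trichotomy (w x) s with hlt | heq | hgt
  · -- the constant term dominates
    have hdom := hw.apply_sum_eq_of_lt hneg (mem_range.2 n.succ_pos) (l := fun k => b k * x ^ k)
      fun k hk hk0 => by
        rw [hterm, hterm, h0, pow_zero, mul_one]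
        calc w (b k) * w x ^ k ≤ s ^ (n - k) * w x ^ k :=
              mul_le_mul_of_nonneg_right (hb' k (by simp at hk; omega)) (by positivity)
          _ < s ^ (n - k) * s ^ k :=
              mul_lt_mul_of_pos_left (pow_lt_pow_left₀ hlt (w.nonneg x) hk0)
                (pow_pos ((w.nonneg x).trans_lt hlt) _)
          _ = s ^ n := by rw [← pow_add, Nat.sub_add_cancel (by simp at hk; omega)]
    rw [hroot, map_zero, hterm, h0, pow_zero, mul_one] at hdom
    exact absurd hdom.symm (pow_pos ((w.nonneg x).trans_lt hlt) n).ne'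
  · exact heq
  · -- the leading term dominates
    have hx : 0 < w x := hs.trans_lt hgt
    have hdom := hw.apply_sum_eq_of_lt hneg (self_mem_range_succ n) (l := fun k => b k * x ^ k)
      fun k hk hkn => by
        have hkn : k < n := by simp at hk; omega
        rw [hterm, hterm, hmonic, map_one, one_mul]
        calc w (b k) * w x ^ k ≤ s ^ (n - k) * w x ^ k :=
              mul_le_mul_of_nonneg_right (hb k hkn) (by positivity)
          _ < w x ^ (n - k) * w x ^ k :=
              mul_lt_mul_of_pos_right (pow_lt_pow_left₀ hgt hs (by omega)) (pow_pos hx _)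
          _ = w x ^ n := by rw [← pow_add, Nat.sub_add_cancel hkn.le]
    rw [hroot, map_zero, hterm, hmonic, map_one, one_mul] at hdom
    exact absurd hdom.symm (pow_pos hx n).ne'

theorem apply_natCast_eq_one_of_succ (hw : IsNonarchimedean w) {n : ℕ}
    (hn : w ((n + 1 : ℕ) : L) < 1) : w (n : L) = 1 := by
  have h : w ((n + 1 : ℕ) : L) < w (-1) := by rwa [map_neg_eq_map, map_one]
  rw [show (n : L) = ((n + 1 : ℕ) : L) + -1 by push_cast; ring, hw.add_eq_right_of_lt h,
    map_neg_eq_map, map_one]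

theorem apply_choose_le_of_prime (hw : IsNonarchimedean w) {p k : ℕ} (hp : p.Prime)
    (hk0 : k ≠ 0) (hkp : k < p) : w (p.choose k : L) ≤ w (p : L) := by
  obtain ⟨m, hm⟩ := hp.dvd_choose_self hk0 hkp
  rw [hm, Nat.cast_mul, map_mul]
  exact mul_le_of_le_one_right (w.nonneg _) hw.apply_natCast_le_one

variable {c y : L} {n : ℕ}

theorem apply_divDiffCoeff_zero (hw : IsNonarchimedean w) (hn : 0 < n) (hc0 : c ≠ 0)
    (hc1 : w c < 1) (hcp : w ((n + 1 : ℕ) : L) ≤ w c) (hy : w y ^ (n + 1) = w c) :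
    w (divDiffCoeff c y n 0) = (w y ^ 2) ^ n := by
  have hy0 : 0 < w y := by
    refine (w.nonneg y).lt_of_ne fun h => hc0 ?_
    rwa [← h, zero_pow n.succ_ne_zero, eq_comm, AbsoluteValue.eq_zero] at hy
  have hy1 : w y < 1 := (pow_lt_one_iff_of_nonneg (w.nonneg y) n.succ_ne_zero).1 (hy ▸ hc1)
  have hn' : w (n : L) = 1 := hw.apply_natCast_eq_one_of_succ (hcp.trans_lt hc1)
  have hlt : w (((n + 1 : ℕ) : L) * y ^ n) < w (c * n * y ^ (n - 1)) := by
    rw [map_mul, map_mul, map_mul, hn', mul_one, map_pow, map_pow]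
    calc w ((n + 1 : ℕ) : L) * w y ^ n ≤ w c * w y ^ n :=
          mul_le_mul_of_nonneg_right hcp (by positivity)
      _ < w c * w y ^ (n - 1) :=
          mul_lt_mul_of_pos_left (pow_lt_pow_right_of_lt_one₀ hy0 hy1 (by omega))
            ((w.pos_iff).2 hc0)
  simp only [divDiffCoeff, zero_add, Nat.choose_one_right, Nat.sub_zero]
  rw [hw.add_eq_right_of_lt hlt, map_mul, map_mul, hn', mul_one, map_pow, ← hy, ← pow_mul,
    ← pow_add]
  congr 1
  omega

theorem apply_divDiffCoeff_le (hw : IsNonarchimedean w) (hp : (n + 1).Prime)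
    (hcp : w ((n + 1 : ℕ) : L) ≤ w c) (hy1 : w y ≤ 1) (hy : w y ^ (n + 1) = w c) {k : ℕ}
    (hk : k < n) : w (divDiffCoeff c y n k) ≤ (w y ^ 2) ^ (n - k) := by
  have hchoose : w (((n + 1).choose (k + 1) : ℕ) : L) ≤ w c :=
    (hw.apply_choose_le_of_prime hp k.succ_ne_zero (by omega)).trans hcp
  have h₁ : w (((n + 1).choose (k + 1) : ℕ) * y ^ (n - k)) ≤ w c * w y ^ (n - (k + 1)) := by
    rw [map_mul, map_pow]
    exact mul_le_mul hchoose (pow_le_pow_of_le_one (w.nonneg y) hy1 (by omega))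
      (by positivity) (w.nonneg c)
  have h₂ : w (c * (n.choose (k + 1) : ℕ) * y ^ (n - (k + 1))) ≤ w c * w y ^ (n - (k + 1)) := by
    rw [map_mul, map_mul, map_pow]
    exact mul_le_mul_of_nonneg_right (mul_le_of_le_one_right (w.nonneg c)
      hw.apply_natCast_le_one) (by positivity)
  calc w (divDiffCoeff c y n k) ≤ w c * w y ^ (n - (k + 1)) := (hw _ _).trans (max_le h₁ h₂)
    _ = w y ^ (2 * n - k) := by rw [← hy, ← pow_add]; congr 1; omega
    _ ≤ (w y ^ 2) ^ (n - k) := by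
        rw [← pow_mul]; exact pow_le_pow_of_le_one (w.nonneg y) hy1 (by omega)

theorem apply_sub_eq_sq_of_roots (hw : IsNonarchimedean w) (hp : (n + 1).Prime) {ϖ₁ ϖ₂ : L}
    (hc0 : c ≠ 0) (hc1 : w c < 1) (hcp : w ((n + 1 : ℕ) : L) ≤ w c)
    (h₁ : ϖ₁ ^ (n + 1) + c * ϖ₁ ^ n - c = 0) (h₂ : ϖ₂ ^ (n + 1) + c * ϖ₂ ^ n - c = 0)
    (hne : ϖ₁ ≠ ϖ₂) : w (ϖ₁ - ϖ₂) = w ϖ₂ ^ 2 := by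
  have hn : 0 < n := by have := hp.two_le; omega
  have hy := hw.pow_apply_eq_of_root hn hc1 h₂
  have hy1 : w ϖ₂ < 1 := hw.apply_lt_one_of_root hc1 h₂
  have hsum : ∑ k ∈ range (n + 1), divDiffCoeff c ϖ₂ n k * (ϖ₁ - ϖ₂) ^ k = 0 := by
    refine (mul_eq_zero.1 ?_).resolve_left (sub_ne_zero.2 hne)
    rw [← add_pow_succ_add_mul_pow_sub, add_sub_cancel]
    linear_combination h₁ - h₂
  exact hw.apply_eq_of_sum_mul_pow_eq_zero hn hsum (divDiffCoeff_self c ϖ₂ n)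
    (hw.apply_divDiffCoeff_zero hn hc0 hc1 hcp hy)
    fun k hk => hw.apply_divDiffCoeff_le hp hcp hy1.le hy hk

end IsNonarchimedean

theorem stmt6_general {K L : Type*} [Field K] [Field L] [Algebra K L]
    (p : ℕ) (hp : p.Prime)
    (v : AbsoluteValue K ℝ)
    (θ : ℝ) (hθ0 : 0 < θ) (hθ1 : θ < 1)
    (hvp : v (p : K) ≤ θ)
    (π : K) (hπ : v π = θ)
    (w : AbsoluteValue L ℝ) (hwna : ∀ x y : L, w (x + y) ≤ max (w x) (w y))
    (hcompat : ∀ x : K, w (algebraMap K L x) = v x)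
    (ϖ₁ ϖ₂ : L)
    (h₁ : ϖ₁ ^ p + algebraMap K L π * ϖ₁ ^ (p - 1) - algebraMap K L π = 0)
    (h₂ : ϖ₂ ^ p + algebraMap K L π * ϖ₂ ^ (p - 1) - algebraMap K L π = 0)
    (hne : ϖ₁ ≠ ϖ₂) :
    w (ϖ₁ - ϖ₂) = θ ^ ((2 : ℝ) / p) := by
  have hw : IsNonarchimedean w := hwna
  obtain ⟨n, rfl⟩ : ∃ n, p = n + 1 := ⟨p - 1, (Nat.sub_add_cancel hp.pos).symm⟩
  rw [Nat.add_sub_cancel] at h₁ h₂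
  have hc : w (algebraMap K L π) = θ := by rw [hcompat, hπ]
  have hc0 : algebraMap K L π ≠ 0 := by
    rintro h; rw [h, map_zero] at hc; exact hθ0.ne hc
  have hcp : w ((n + 1 : ℕ) : L) ≤ w (algebraMap K L π) := by
    rwa [← map_natCast (algebraMap K L), hcompat, hc]
  have hy := hw.pow_apply_eq_of_root (by have := hp.two_le; omega) (hc ▸ hθ1) h₂
  rw [hw.apply_sub_eq_sq_of_roots hp hc0 (hc ▸ hθ1) hcp h₁ h₂ hne, ← hc, ← hy,
    ← Real.rpow_natCast _ (n + 1), ← Real.rpow_mul (w.nonneg _),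
    mul_div_cancel₀ _ (by positivity), Real.rpow_two]

/-- Let `K` be a complete discretely valued field of mixed characteristic
`(0,p)` with uniformizer `π_K` (`|π_K| = θ`, so `v_K(p) ≥ 1`, i.e. `|p| ≤ θ`), and let
`ϖ₁, ϖ₂` be two distinct roots of `T^p + π_K T^{p−1} − π_K` in an extension `L` with compatible
nonarchimedean absolute value `w`.  Then `v_{K_*}(ϖ₁ − ϖ₂) = 2` in the normalization with
`v_{K_*}(ϖ_i) = 1`; multiplicatively, `w (ϖ₁ − ϖ₂) = θ^{2/p}`. -/
theorem stmt6 {K L : Type*} [Field K] [CharZero K] [Field L] [Algebra K L]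
    (p : ℕ) (hp : p.Prime)
    (v : AbsoluteValue K ℝ) (hna : ∀ x y : K, v (x + y) ≤ max (v x) (v y))
    (θ : ℝ) (hθ0 : 0 < θ) (hθ1 : θ < 1)
    (hdisc : ∀ x : K, x ≠ 0 → ∃ n : ℤ, v x = θ ^ n)
    (hvp : v (p : K) ≤ θ)
    (π : K) (hπ : v π = θ)
    (w : AbsoluteValue L ℝ) (hwna : ∀ x y : L, w (x + y) ≤ max (w x) (w y))
    (hcompat : ∀ x : K, w (algebraMap K L x) = v x)
    (ϖ₁ ϖ₂ : L)
    (h₁ : ϖ₁ ^ p + algebraMap K L π * ϖ₁ ^ (p - 1) - algebraMap K L π = 0)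
    (h₂ : ϖ₂ ^ p + algebraMap K L π * ϖ₂ ^ (p - 1) - algebraMap K L π = 0)
    (hne : ϖ₁ ≠ ϖ₂) :
    w (ϖ₁ - ϖ₂) = θ ^ ((2 : ℝ) / p) :=
  stmt6_general p hp v θ hθ0 hθ1 hvp π hπ w hwna hcompat ϖ₁ ϖ₂ h₁ h₂ hne
end

section
/- Let K be a complete nonarchimedean field, ϖ₁,…,ϖ_p elements with |ϖ_i| = θ^{2/p} pairwise satisfying |ϖ_i − ϖ_j| = θ^{2/p} for i ≠ j (here after rescaling: the roots of T^p + πT^{p−1} − π). If z, δ₀ satisfy |z| ≤ 1, ∏_{γ=1}^p (z − ϖ_γ) = δ₀(1 − z^{p−1}), and |δ₀| ≤ θ^{a+1} with a > 1, then there is a unique index γ₀ such that |z − ϖ_{γ₀}| < |z − ϖ_γ| for all γ ≠ γ₀, and |z − ϖ_{γ₀}| = |δ₀|·θ^{−2(p−1)/p}. -/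
/-!
Put `r = θ^{2/p}`. The product `∏ |z − ϖ_γ| = |δ₀|·|1 − z^{p−1}|` is at most `|δ₀| < θ² = r^p`,
so some factor `|z − ϖ_{γ₀}|` is smaller than `r`. As the `ϖ_γ` are mutually at distance `r`,
the ultrametric inequality forces every other factor to equal `r`, and also `|z| = |ϖ_{γ₀}| = r < 1`,
whence `|1 − z^{p−1}| = 1`. The product then reads `|z − ϖ_{γ₀}|·r^{p−1} = |δ₀|`.
-/

lemma Finset.exists_lt_of_prod_lt_pow {ι R : Type*} [CommSemiring R] [LinearOrder R]
    [IsOrderedRing R] {s : Finset ι} {f : ι → R} {r : R} (hr : 0 ≤ r)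
    (h : ∏ i ∈ s, f i < r ^ s.card) : ∃ i ∈ s, f i < r := by
  by_contra! hle
  exact h.not_ge <| by simpa using Finset.prod_le_prod (fun _ _ ↦ hr) hle

lemma Fintype.prod_eq_mul_pow_of_forall_ne {ι M : Type*} [Fintype ι] [CommMonoid M]
    {f : ι → M} {i : ι} {c : M} (h : ∀ j ≠ i, f j = c) :
    ∏ j, f j = f i * c ^ (Fintype.card ι - 1) := by
  classical
  rw [Fintype.prod_eq_mul_prod_compl i, Finset.prod_congr rfl fun j hj ↦
    h j (Finset.mem_compl.1 hj |>.imp (Finset.mem_singleton.2 ·)), Finset.prod_const,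
    Finset.card_compl, Finset.card_singleton]

lemma Real.rpow_div_natCast_pow {θ : ℝ} (hθ : 0 ≤ θ) (x : ℝ) (n m : ℕ) :
    (θ ^ (x / n)) ^ m = θ ^ (x * m / n) := by
  rw [← Real.rpow_natCast, ← Real.rpow_mul hθ, div_mul_eq_mul_div]

namespace IsNonarchimedean

variable {F α : Type*} [AddGroup α] [FunLike F α ℝ] [AddGroupSeminormClass F α ℝ] {f : F}

lemma apply_sub_eq_of_lt (hna : IsNonarchimedean f) {z a b : α} (h : f (z - a) < f (a - b)) :
    f (z - b) = f (a - b) := by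
  rw [← sub_add_sub_cancel z a b, hna.add_eq_right_of_lt h]

lemma exists_apply_sub_lt_of_prod_lt_pow {ι : Type*} [Fintype ι] (hna : IsNonarchimedean f)
    {ϖ : ι → α} {r : ℝ} (hr : 0 ≤ r) (hpair : ∀ i j, i ≠ j → f (ϖ i - ϖ j) = r) {z : α}
    (hprod : ∏ i, f (z - ϖ i) < r ^ Fintype.card ι) :
    ∃ i, f (z - ϖ i) < r ∧ ∀ j ≠ i, f (z - ϖ j) = r := by
  obtain ⟨i, -, hi⟩ := Finset.exists_lt_of_prod_lt_pow hr hprod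
  refine ⟨i, hi, fun j hj ↦ ?_⟩
  rw [← hpair i j hj.symm]
  exact hna.apply_sub_eq_of_lt (hi.trans_eq (hpair i j hj.symm).symm)

lemma apply_one_sub_le_one {R : Type*} [Ring R] [Nontrivial R] {w : AbsoluteValue R ℝ}
    (hna : IsNonarchimedean w) {x : R} (hx : w x ≤ 1) : w (1 - x) ≤ 1 := by
  simpa [sub_eq_add_neg] using (hna 1 (-x)).trans (max_le w.map_one.le (by simpa using hx))

lemma apply_one_sub_eq_one {R : Type*} [Ring R] [Nontrivial R] {w : AbsoluteValue R ℝ}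
    (hna : IsNonarchimedean w) {x : R} (hx : w x < 1) : w (1 - x) = 1 := by
  rw [sub_eq_add_neg, hna.add_eq_left_of_lt (by simpa using hx), map_one]

end IsNonarchimedean

/-- Let `L` be a complete nonarchimedean field and `ϖ₁,…,ϖ_p` elements with
`|ϖ_γ| = θ^{2/p}` and pairwise `|ϖ_γ − ϖ_{γ'}| = θ^{2/p}` for `γ ≠ γ'`.  If `z, δ₀` satisfy
`|z| ≤ 1`, `∏_{γ} (z − ϖ_γ) = δ₀·(1 − z^{p−1})` and `|δ₀| ≤ θ^{a+1}` with `a > 1`, then there is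
a unique index `γ₀` such that `|z − ϖ_{γ₀}| < |z − ϖ_γ|` for all `γ ≠ γ₀`, and
`|z − ϖ_{γ₀}| = |δ₀|·θ^{−2(p−1)/p}`. -/
theorem stmt7 {L : Type*} [Field L] (p : ℕ) (hp : p.Prime)
    (w : AbsoluteValue L ℝ) (hna : ∀ x y : L, w (x + y) ≤ max (w x) (w y))
    (θ a : ℝ) (hθ0 : 0 < θ) (hθ1 : θ < 1) (ha : 1 < a)
    (ϖ : Fin p → L)
    (hw : ∀ γ, w (ϖ γ) = θ ^ ((2 : ℝ) / p))
    (hpair : ∀ γ γ', γ ≠ γ' → w (ϖ γ - ϖ γ') = θ ^ ((2 : ℝ) / p))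
    (z δ₀ : L) (hz : w z ≤ 1)
    (heq : ∏ γ, (z - ϖ γ) = δ₀ * (1 - z ^ (p - 1)))
    (hδ : w δ₀ ≤ θ ^ (a + 1)) :
    ∃! γ₀ : Fin p,
      (∀ γ, γ ≠ γ₀ → w (z - ϖ γ₀) < w (z - ϖ γ)) ∧
        w (z - ϖ γ₀) = w δ₀ * θ ^ (-(2 * ((p : ℝ) - 1) / p)) := by
  have hna : IsNonarchimedean w := hna
  set r := θ ^ ((2 : ℝ) / p) with hr
  have hr1 : r < 1 := Real.rpow_lt_one hθ0.le hθ1 (by have := hp.pos; positivity)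
  have hprod : ∏ γ, w (z - ϖ γ) = w δ₀ * w (1 - z ^ (p - 1)) := by
    rw [← map_prod, heq, map_mul]
  have hone_le : w (1 - z ^ (p - 1)) ≤ 1 :=
    hna.apply_one_sub_le_one (by simpa using pow_le_one₀ (w.nonneg z) hz)
  have hsmall : ∏ γ, w (z - ϖ γ) < r ^ Fintype.card (Fin p) :=
    calc ∏ γ, w (z - ϖ γ) = w δ₀ * w (1 - z ^ (p - 1)) := hprod
      _ ≤ θ ^ (a + 1) * 1 := mul_le_mul hδ hone_le (w.nonneg _) (by positivity)
      _ < θ ^ (2 * p / p : ℝ) := by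
        rw [mul_one, mul_div_cancel_right₀ _ (by exact_mod_cast hp.ne_zero)]
        exact Real.rpow_lt_rpow_of_exponent_gt hθ0 hθ1 (by linarith)
      _ = r ^ Fintype.card (Fin p) := by
        rw [Fintype.card_fin, hr, Real.rpow_div_natCast_pow hθ0.le]
  obtain ⟨γ₀, hγ₀, hother⟩ := hna.exists_apply_sub_lt_of_prod_lt_pow (by positivity) hpair hsmall
  have hzr : w z = r := by
    have := hna.add_eq_right_of_lt (hγ₀.trans_eq (hw γ₀).symm)
    rwa [sub_add_cancel, hw] at this
  have hkey : w (z - ϖ γ₀) * r ^ (p - 1) = w δ₀ := by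
    have hz1 : w (z ^ (p - 1)) < 1 := by
      rw [map_pow]
      exact pow_lt_one₀ (w.nonneg z) (hzr.trans_lt hr1) (by have := hp.two_le; omega)
    rw [← Fintype.card_fin p, ← Fintype.prod_eq_mul_pow_of_forall_ne hother, hprod,
      hna.apply_one_sub_eq_one hz1, mul_one]
  refine ⟨γ₀, ⟨fun γ hγ ↦ hγ₀.trans_eq (hother γ hγ).symm, ?_⟩, fun γ₁ h₁ ↦ ?_⟩
  · rw [← hkey, hr, Real.rpow_div_natCast_pow hθ0.le, mul_assoc, ← Real.rpow_add hθ0,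
      Nat.cast_pred hp.pos, add_neg_cancel, Real.rpow_zero, mul_one]
  · by_contra hne
    exact lt_asymm (h₁.1 γ₀ (Ne.symm hne)) (hγ₀.trans_eq (hother γ₁ hne).symm)
end
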